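/- Let 0 < s < 1, let u be harmonic on the annulus A = {z ∈ ℂ : s < |z| < 1} and continuous on its closure Ā = {z : s ≤ |z| ≤ 1}. Then for every r ∈ [s, 1], ⨍_{|z|=r} u = (log r / log s) · ⨍_{|z|=s} u + (1 − log r / log s) · ⨍_{|z|=1} u, where ⨍_{|z|=ρ} u denotes the circle average (1/(2π)) ∫₀^{2π} u(ρ·e^{iθ}) dθ. -/

import Mathlib

set_option maxHeartbeats 1000000


open Complex Metric Filter Set MeasureTheory intervalIntegral

noncomputable section

/-- The average of `f` over the circle of radius `r` centred at `a`:
`(1/(2π)) ∫₀^{2π} f (a + r e^{iθ}) dθ`. -/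
def circleAvg (f : ℂ → ℝ) (a : ℂ) (r : ℝ) : ℝ :=
  (1 / (2 * Real.pi)) *
    ∫ θ in (0:ℝ)..(2 * Real.pi), f (a + (r : ℂ) * Complex.exp ((θ : ℂ) * Complex.I))

/-- `f` is subharmonic on `U`: upper semicontinuous on `U` and satisfying the
sub-mean value inequality on every closed disc contained in `U`. -/
def IsSubharmonicOn (f : ℂ → ℝ) (U : Set ℂ) : Prop :=
  UpperSemicontinuousOn f U ∧
    ∀ a ∈ U, ∀ r : ℝ, 0 < r → closedBall a r ⊆ U → f a ≤ circleAvg f a r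

/-- `u` is harmonic on `U`: continuous on `U` and satisfying the mean value
property on every closed disc contained in `U`. -/
def IsHarmonicOn (u : ℂ → ℝ) (U : Set ℂ) : Prop :=
  ContinuousOn u U ∧
    ∀ a ∈ U, ∀ r : ℝ, 0 < r → closedBall a r ⊆ U → u a = circleAvg u a r

/-- The supremum of `f` on the circle `{|z| = r}`. -/
def circleSup (f : ℂ → ℝ) (r : ℝ) : ℝ := sSup (f '' sphere (0:ℂ) r)

/-- The punctured open unit disc `𝔻* = {z : 0 < |z| < 1}`. -/
def punctDisc : Set ℂ := {z : ℂ | 0 < ‖z‖ ∧ ‖z‖ < 1}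

/-- `f` has logarithmic growth near `0` witnessed by `a`:
`f(z) + a·log|z|` is bounded above on some punctured neighbourhood of `0`. -/
def LogGrowth (f : ℂ → ℝ) (a : ℝ) : Prop :=
  ∃ C ε : ℝ, 0 < ε ∧ ∀ z : ℂ, 0 < ‖z‖ → ‖z‖ < ε →
    f z + a * Real.log (‖z‖) ≤ C

/-- `L = lim_{r→0⁺} (sup_{|z|=r} f + a log r)/(-log r)`; the generalized slope
of `f` at `0` is then `f̂ = L + a`. -/
def HasSlope (f : ℂ → ℝ) (a L : ℝ) : Prop :=
  Tendsto (fun r : ℝ => (circleSup f r + a * Real.log r) / (-Real.log r))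
    (nhdsWithin 0 (Set.Ioi 0)) (nhds L)

/-- The open annulus `{s < |z| < t}`. -/
def annulus (s t : ℝ) : Set ℂ := {z : ℂ | s < ‖z‖ ∧ ‖z‖ < t}

/-- The closed annulus `{s ≤ |z| ≤ t}`. -/
def closedAnnulus (s t : ℝ) : Set ℂ := {z : ℂ | s ≤ ‖z‖ ∧ ‖z‖ ≤ t}

/-- The boundary `{|z| = s} ∪ {|z| = 1}` of the annulus `{s < |z| < 1}`. -/
def annulusBoundary (s : ℝ) : Set ℂ := sphere (0:ℂ) s ∪ sphere (0:ℂ) 1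

lemma circleAvg_eq (f : ℂ → ℝ) (a : ℂ) (r : ℝ) :
    circleAvg f a r = (1/(2*Real.pi)) * ∫ θ in (0:ℝ)..(2*Real.pi), f (circleMap a r θ) := rfl

/-- integrability helper -/
lemma intInt_of_continuousOn {f : ℂ → ℝ} {S : Set ℂ} (hf : ContinuousOn f S)
    {a : ℂ} {r : ℝ} (h : ∀ θ : ℝ, circleMap a r θ ∈ S) :
    IntervalIntegrable (fun θ => f (circleMap a r θ)) volume 0 (2*Real.pi) :=
  (hf.comp_continuous (continuous_circleMap a r) h).intervalIntegrable _ _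

lemma circleAvg_const (c : ℝ) (a : ℂ) (r : ℝ) : circleAvg (fun _ => c) a r = c := by
  rw [circleAvg_eq]
  simp [intervalIntegral.integral_const, smul_eq_mul]
  field_simp

lemma circleAvg_sub {f g : ℂ → ℝ} {a : ℂ} {r : ℝ}
    (hf : IntervalIntegrable (fun θ => f (circleMap a r θ)) volume 0 (2*Real.pi))
    (hg : IntervalIntegrable (fun θ => g (circleMap a r θ)) volume 0 (2*Real.pi)) :
    circleAvg (fun z => f z - g z) a r = circleAvg f a r - circleAvg g a r := by
  rw [circleAvg_eq, circleAvg_eq, circleAvg_eq, intervalIntegral.integral_sub hf hg]; ring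

lemma circleAvg_add {f g : ℂ → ℝ} {a : ℂ} {r : ℝ}
    (hf : IntervalIntegrable (fun θ => f (circleMap a r θ)) volume 0 (2*Real.pi))
    (hg : IntervalIntegrable (fun θ => g (circleMap a r θ)) volume 0 (2*Real.pi)) :
    circleAvg (fun z => f z + g z) a r = circleAvg f a r + circleAvg g a r := by
  rw [circleAvg_eq, circleAvg_eq, circleAvg_eq, intervalIntegral.integral_add hf hg]; ring

lemma circleAvg_const_mul (c : ℝ) (f : ℂ → ℝ) (a : ℂ) (r : ℝ) :
    circleAvg (fun z => c * f z) a r = c * circleAvg f a r := by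
  rw [circleAvg_eq, circleAvg_eq, intervalIntegral.integral_const_mul]; ring

lemma circleAvg_mono {f g : ℂ → ℝ} {a : ℂ} {r : ℝ}
    (hf : IntervalIntegrable (fun θ => f (circleMap a r θ)) volume 0 (2*Real.pi))
    (hg : IntervalIntegrable (fun θ => g (circleMap a r θ)) volume 0 (2*Real.pi))
    (h : ∀ θ : ℝ, f (circleMap a r θ) ≤ g (circleMap a r θ)) :
    circleAvg f a r ≤ circleAvg g a r := by
  rw [circleAvg_eq, circleAvg_eq]
  have h2 : (0:ℝ) < 2 * Real.pi := Real.two_pi_pos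
  have := intervalIntegral.integral_mono_on h2.le hf hg (fun θ _ => h θ)
  have hpos : (0:ℝ) < 1 / (2*Real.pi) := by positivity
  nlinarith [this]

/-- Mean value property from the Cauchy integral formula. -/
lemma complex_mvp {g : ℂ → ℂ} {c : ℂ} {R : ℝ} (hR : 0 < R)
    (hc : ContinuousOn g (closedBall c R))
    (hd : ∀ x ∈ ball c R, DifferentiableAt ℂ g x) :
    ∫ θ in (0:ℝ)..(2*Real.pi), g (circleMap c R θ) = (2*Real.pi) * g c := by
  have h := circleIntegral_sub_inv_smul_of_differentiable_on_off_countable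
    (s := (∅ : Set ℂ)) countable_empty (Metric.mem_ball_self hR) hc
    (fun x hx => hd x hx.1)
  rw [circleIntegral] at h
  have key : ∀ θ : ℝ, deriv (circleMap c R) θ • ((circleMap c R θ - c)⁻¹ • g (circleMap c R θ))
      = I * g (circleMap c R θ) := by
    intro θ
    rw [deriv_circleMap, circleMap_sub_center, smul_eq_mul, smul_eq_mul]
    have hne : circleMap 0 R θ ≠ 0 := by simpa using circleMap_ne_center (c := (0:ℂ)) hR.ne' (θ := θ)
    field_simp
  simp_rw [key] at h
  rw [intervalIntegral.integral_const_mul] at h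
  have hI : (I : ℂ) ≠ 0 := I_ne_zero
  have : I * ∫ θ in (0:ℝ)..(2*Real.pi), g (circleMap c R θ) = I * ((2*Real.pi) * g c) := by
    rw [h, smul_eq_mul]; ring
  exact mul_left_cancel₀ hI this

lemma re_intervalIntegral {f : ℝ → ℂ} {a b : ℝ} (hf : IntervalIntegrable f volume a b) :
    (∫ x in a..b, f x).re = ∫ x in a..b, (f x).re := by
  exact (Complex.reCLM.intervalIntegral_comp_comm hf).symm


lemma log_abs_mvp {a : ℂ} {ρ : ℝ} (hρ : 0 < ρ) (hρa : ρ < ‖a‖) :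
    ∫ θ in (0:ℝ)..(2*Real.pi), Real.log (‖circleMap a ρ θ‖)
      = (2*Real.pi) * Real.log (‖a‖) := by
  have ha : a ≠ 0 := by
    intro h; rw [h, norm_zero] at hρa; linarith
  set g : ℂ → ℂ := fun w => Complex.log (w / a) with hg
  have hslit : ∀ w ∈ closedBall a ρ, w / a ∈ Complex.slitPlane := by
    intro w hw
    have h1 : ‖w / a - 1‖ < 1 := by
      rw [show w / a - 1 = (w - a) / a by field_simp, norm_div,
        div_lt_one (norm_pos_iff.mpr ha)]
      calc ‖w - a‖ ≤ ρ := by simpa [Complex.dist_eq] using hw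
        _ < ‖a‖ := hρa
    left
    have h2 : |(w/a).re - 1| < 1 := by
      calc |(w/a).re - 1| = |(w/a - 1).re| := by norm_num
        _ ≤ ‖w/a - 1‖ := Complex.abs_re_le_norm _
        _ < 1 := h1
    rw [abs_lt] at h2; linarith
  have hdiff : ∀ w ∈ closedBall a ρ, DifferentiableAt ℂ g w := by
    intro w hw
    exact (Complex.differentiableAt_log (hslit w hw)).comp w
      (differentiableAt_id.div_const a)
  have hcont : Continuous fun θ => g (circleMap a ρ θ) :=
    ContinuousOn.comp_continuous
      (fun w hw => (hdiff w hw).continuousAt.continuousWithinAt)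
      (continuous_circleMap a ρ) (fun θ => circleMap_mem_closedBall a hρ.le θ)
  have hmvp := complex_mvp hρ (fun w hw => (hdiff w hw).continuousAt.continuousWithinAt)
    (fun w hw => hdiff w (ball_subset_closedBall hw))
  have hga : g a = 0 := by simp [hg, div_self ha]
  rw [hga, mul_zero] at hmvp
  have hre : ∀ θ : ℝ, Real.log (‖circleMap a ρ θ‖)
      = (g (circleMap a ρ θ)).re + Real.log (‖a‖) := by
    intro θ
    have hne : circleMap a ρ θ ≠ 0 := by
      intro h
      have h2 := hslit _ (circleMap_mem_closedBall a hρ.le θ)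
      rw [h] at h2; simp [Complex.slitPlane] at h2
    have : (g (circleMap a ρ θ)).re
        = Real.log (‖circleMap a ρ θ‖) - Real.log (‖a‖) := by
      rw [hg]; simp only [Complex.log_re, norm_div]
      exact Real.log_div (by simpa using hne) (by simpa using ha)
    rw [this]; ring
  have h0 : ∫ θ in (0:ℝ)..(2*Real.pi), (g (circleMap a ρ θ)).re = 0 := by
    rw [← re_intervalIntegral (hcont.intervalIntegrable _ _), hmvp]; simp
  simp_rw [hre]
  have h1 : IntervalIntegrable (fun θ => (g (circleMap a ρ θ)).re) volume 0 (2*Real.pi) :=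
    (Complex.continuous_re.comp hcont).intervalIntegrable _ _
  rw [intervalIntegral.integral_add h1 intervalIntegrable_const, h0]
  simp [smul_eq_mul]

lemma integral_exp_neg_theta : ∫ θ in (0:ℝ)..(2*Real.pi), Complex.exp (-I * θ) = 0 := by
  rw [integral_exp_mul_complex (by simp [I_ne_zero])]
  have h : Complex.exp (-I * ((2*Real.pi : ℝ) : ℂ)) = 1 := by
    rw [show (-I * ((2*Real.pi:ℝ):ℂ) : ℂ) = -(2*Real.pi*I) by push_cast; ring, Complex.exp_neg,
      Complex.exp_two_pi_mul_I]; simp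
  rw [h]; simp

lemma circleAvg_sq (a : ℂ) (ρ : ℝ) :
    circleAvg (fun z => ‖z‖ ^ 2) a ρ = ‖a‖ ^ 2 + ρ ^ 2 := by
  rw [circleAvg_eq]
  have key : ∀ θ : ℝ, ‖circleMap a ρ θ‖ ^ 2
      = ((a * (ρ:ℂ)) * Complex.exp (-I * θ)).re * 2 + (‖a‖ ^ 2 + ρ^2) := by
    intro θ
    rw [Complex.sq_norm, circleMap, Complex.normSq_add]
    have h1 : Complex.normSq (↑ρ * Complex.exp (↑θ * I)) = ρ ^ 2 := by
      have : Complex.normSq (Complex.exp (↑θ * I)) = 1 := by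
        rw [← Complex.sq_norm, Complex.norm_exp_ofReal_mul_I]; norm_num
      rw [Complex.normSq_mul, this, Complex.normSq_ofReal]; ring
    have h2 : (starRingEnd ℂ) (↑ρ * Complex.exp (↑θ * I)) = ↑ρ * Complex.exp (-I * θ) := by
      rw [map_mul, Complex.conj_ofReal, ← Complex.exp_conj]
      congr 1
      simp [map_mul, Complex.conj_ofReal, Complex.conj_I]; ring
    rw [h1, h2, Complex.sq_norm]
    ring_nf
  simp_rw [key]
  rw [intervalIntegral.integral_add (by
      apply Continuous.intervalIntegrable; continuity) intervalIntegrable_const,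
    intervalIntegral.integral_mul_const, ← re_intervalIntegral (by
      apply Continuous.intervalIntegrable
      exact continuous_const.mul (Continuous.cexp (by continuity))),
    intervalIntegral.integral_const_mul, integral_exp_neg_theta]
  simp [smul_eq_mul]
  field_simp

lemma periodic_shift {f : ℝ → ℝ} (hf : Function.Periodic f (2*Real.pi)) (γ : ℝ) :
    ∫ θ in (0:ℝ)..(2*Real.pi), f (θ + γ) = ∫ θ in (0:ℝ)..(2*Real.pi), f θ := by
  rw [intervalIntegral.integral_comp_add_right]
  have := hf.intervalIntegral_add_eq γ 0
  simpa [add_comm] using this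

lemma exp_theta_periodic (c : ℂ) :
    Function.Periodic (fun θ : ℝ => c * Complex.exp ((θ:ℂ) * I)) (2*Real.pi) := by
  intro θ
  have : ((θ + 2*Real.pi : ℝ) : ℂ) * I = θ * I + 2*Real.pi*I := by push_cast; ring
  simp only [this, Complex.exp_add, Complex.exp_two_pi_mul_I, mul_one]

lemma rotate_integral (u : ℂ → ℝ) {w : ℂ} (_hw : w ≠ 0) :
    ∫ θ in (0:ℝ)..(2*Real.pi), u (w * Complex.exp ((θ:ℂ) * I))
      = ∫ θ in (0:ℝ)..(2*Real.pi), u ((‖w‖ : ℂ) * Complex.exp ((θ:ℂ) * I)) := by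
  have key : ∀ θ : ℝ, w * Complex.exp ((θ:ℂ)*I)
      = (‖w‖ : ℂ) * Complex.exp (((θ + Complex.arg w : ℝ) : ℂ) * I) := by
    intro θ
    conv_lhs => rw [← Complex.norm_mul_exp_arg_mul_I w]
    rw [mul_assoc, ← Complex.exp_add]
    push_cast; ring_nf
  simp_rw [key]
  exact periodic_shift ((exp_theta_periodic _).comp u) (Complex.arg w)

lemma mySwap_integral {G : ℝ → ℝ → ℝ} (hG : Continuous (fun p : ℝ × ℝ => G p.1 p.2)) :
    ∫ α in (0:ℝ)..(2*Real.pi), ∫ θ in (0:ℝ)..(2*Real.pi), G α θ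
      = ∫ θ in (0:ℝ)..(2*Real.pi), ∫ α in (0:ℝ)..(2*Real.pi), G α θ := by
  have h2 : (0:ℝ) ≤ 2*Real.pi := Real.two_pi_pos.le
  have hint : MeasureTheory.Integrable (Function.uncurry G)
      ((volume.restrict (Ioc (0:ℝ) (2*Real.pi))).prod
        (volume.restrict (Ioc (0:ℝ) (2*Real.pi)))) := by
    rw [Measure.prod_restrict, ← Measure.volume_eq_prod]
    have : MeasureTheory.IntegrableOn (Function.uncurry G)
        (Icc (0:ℝ) (2*Real.pi) ×ˢ Icc (0:ℝ) (2*Real.pi)) volume :=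
      hG.continuousOn.integrableOn_compact (isCompact_Icc.prod isCompact_Icc)
    exact this.mono_set (Set.prod_mono Set.Ioc_subset_Icc_self Set.Ioc_subset_Icc_self)
  rw [intervalIntegral.integral_of_le h2, intervalIntegral.integral_of_le h2]
  simp_rw [intervalIntegral.integral_of_le h2]
  exact MeasureTheory.integral_integral_swap hint

lemma annulus_subset {s t : ℝ} : annulus s t ⊆ closedAnnulus s t :=
  fun z hz => ⟨hz.1.le, hz.2.le⟩

lemma ball_geom {s : ℝ} (hs0 : 0 < s) {a : ℂ} {ρ : ℝ} (hρ : 0 < ρ)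
    (hball : closedBall a ρ ⊆ annulus s 1) :
    ρ < ‖a‖ ∧ s < ‖a‖ - ρ ∧ ‖a‖ + ρ < 1 := by
  have hρa : ρ < ‖a‖ := by
    by_contra h
    push_neg at h
    have h0 : (0:ℂ) ∈ closedBall a ρ := by
      have hd : dist (0:ℂ) a = ‖a‖ := by
        rw [Complex.dist_eq]; simp
      rw [mem_closedBall, hd]; exact h
    have := (hball h0).1
    simp at this; linarith
  have ha : a ≠ 0 := by
    intro h; rw [h, norm_zero] at hρa; linarith
  have habs : (0:ℝ) < ‖a‖ := norm_pos_iff.mpr ha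
  have key : ∀ t : ℝ, |t - 1| * ‖a‖ = ρ → s < |t| * ‖a‖ ∧
      |t| * ‖a‖ < 1 := by
    intro t ht
    have hcb : ((t:ℝ):ℂ) * a ∈ closedBall a ρ := by
      rw [mem_closedBall, Complex.dist_eq,
        show ((t:ℝ):ℂ) * a - a = ((t - 1 : ℝ):ℂ) * a by push_cast; ring,
        norm_mul, Complex.norm_real, Real.norm_eq_abs, ht]
    have h2 := hball hcb
    have h3 : ‖((t:ℝ):ℂ) * a‖ = |t| * ‖a‖ := by
      rw [norm_mul, Complex.norm_real, Real.norm_eq_abs]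
    exact ⟨h3 ▸ h2.1, h3 ▸ h2.2⟩
  constructor
  · exact hρa
  constructor
  · have h1 : |(1 - ρ / ‖a‖) - 1| * ‖a‖ = ρ := by
      rw [show (1 - ρ / ‖a‖) - 1 = -(ρ / ‖a‖) by ring, abs_neg,
        _root_.abs_of_nonneg (by positivity)]
      field_simp
    have h2 := (key _ h1).1
    rwa [_root_.abs_of_nonneg (by rw [sub_nonneg, div_le_one habs]; exact hρa.le),
      sub_mul, one_mul, div_mul_cancel₀ _ habs.ne'] at h2
  · have h1 : |(1 + ρ / ‖a‖) - 1| * ‖a‖ = ρ := by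
      rw [show (1 + ρ / ‖a‖) - 1 = ρ / ‖a‖ by ring,
        _root_.abs_of_nonneg (by positivity)]
      field_simp
    have h2 := (key _ h1).2
    rwa [_root_.abs_of_nonneg (by positivity), add_mul, one_mul,
      div_mul_cancel₀ _ habs.ne'] at h2

lemma ball_rot {s : ℝ} {a c : ℂ} {ρ : ℝ} (habs : ‖c‖ = ‖a‖)
    (h1 : s < ‖a‖ - ρ) (h2 : ‖a‖ + ρ < 1) :
    closedBall c ρ ⊆ annulus s 1 := by
  intro z hz
  rw [mem_closedBall, Complex.dist_eq] at hz
  have hzc : ‖z - c‖ ≤ ρ := by exact hz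
  have h3 := norm_sub_norm_le c z
  have h4 := norm_sub_norm_le z c
  rw [norm_sub_rev] at h3
  rw [habs] at h3 h4
  exact ⟨by linarith, by linarith⟩

lemma closedAnnulus_compact {s : ℝ} : IsCompact (closedAnnulus s 1) := by
  apply Metric.isCompact_of_isClosed_isBounded
  · have : closedAnnulus s 1 = (fun z : ℂ => ‖z‖) ⁻¹' (Icc s 1) := rfl
    rw [this]
    exact isClosed_Icc.preimage continuous_norm
  · apply (Metric.isBounded_closedBall (x := (0:ℂ)) (r := 1)).subset
    intro z hz
    rw [mem_closedBall, Complex.dist_eq, sub_zero]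
    exact hz.2

lemma circleMap_mem_closedAnnulus {s : ℝ} (hs0 : 0 < s) {r : ℝ} (hr : r ∈ Icc s 1) (θ : ℝ) :
    circleMap 0 r θ ∈ closedAnnulus s 1 := by
  have h : ‖circleMap 0 r θ‖ = r := by
    rw [norm_circleMap_zero]; exact _root_.abs_of_nonneg (le_trans hs0.le hr.1)
  exact ⟨by rw [h]; exact hr.1, by rw [h]; exact hr.2⟩

lemma phi_cont {s : ℝ} (hs0 : 0 < s) {u : ℂ → ℝ}
    (hc : ContinuousOn u (closedAnnulus s 1)) :
    ContinuousOn (fun r => circleAvg u 0 r) (Icc s 1) := by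
  have hπ : (0:ℝ) < 2 * Real.pi := Real.two_pi_pos
  have hUC := (closedAnnulus_compact (s := s)).uniformContinuousOn_of_continuous hc
  rw [Metric.uniformContinuousOn_iff] at hUC
  rw [Metric.continuousOn_iff]
  intro r hr ε hε
  obtain ⟨δ, hδ, hδ2⟩ := hUC (ε/2) (by linarith)
  refine ⟨δ, hδ, ?_⟩
  intro r' hr' hd
  have hint : ∀ t : ℝ, t ∈ Icc s 1 →
      IntervalIntegrable (fun θ => u (circleMap 0 t θ)) volume 0 (2*Real.pi) :=
    fun t ht => intInt_of_continuousOn hc (fun θ => circleMap_mem_closedAnnulus hs0 ht θ)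
  have hbound : ∀ θ ∈ Set.uIoc (0:ℝ) (2*Real.pi),
      ‖u (circleMap 0 r' θ) - u (circleMap 0 r θ)‖ ≤ ε/2 := by
    intro θ _
    have hdist : dist (circleMap 0 r' θ) (circleMap 0 r θ) < δ := by
      rw [Complex.dist_eq, circleMap_zero, circleMap_zero,
        show (↑r' * Complex.exp (↑θ * I) - ↑r * Complex.exp (↑θ * I))
          = ((r' - r : ℝ) : ℂ) * Complex.exp (↑θ * I) by push_cast; ring,
        norm_mul, Complex.norm_real, Real.norm_eq_abs, Complex.norm_exp_ofReal_mul_I, mul_one]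
      rwa [Real.dist_eq] at hd
    have := hδ2 _ (circleMap_mem_closedAnnulus hs0 hr' θ)
      _ (circleMap_mem_closedAnnulus hs0 hr θ) hdist
    rw [Real.dist_eq] at this
    exact le_of_lt this
  have hdiff : circleAvg u 0 r' - circleAvg u 0 r = (1/(2*Real.pi)) *
      ∫ θ in (0:ℝ)..(2*Real.pi), (u (circleMap 0 r' θ) - u (circleMap 0 r θ)) := by
    rw [circleAvg_eq, circleAvg_eq, intervalIntegral.integral_sub (hint r' hr') (hint r hr)]
    ring
  have hle := intervalIntegral.norm_integral_le_of_norm_le_const hbound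
  rw [Real.dist_eq]
  calc |circleAvg u 0 r' - circleAvg u 0 r|
      = (1/(2*Real.pi)) * ‖∫ θ in (0:ℝ)..(2*Real.pi),
          (u (circleMap 0 r' θ) - u (circleMap 0 r θ))‖ := by
        rw [hdiff, abs_mul, _root_.abs_of_nonneg (by positivity)]; rfl
    _ ≤ (1/(2*Real.pi)) * (ε/2 * |2*Real.pi - 0|) := by
        apply mul_le_mul_of_nonneg_left hle (by positivity)
    _ = ε/2 := by
        rw [sub_zero, _root_.abs_of_nonneg hπ.le]; field_simp
    _ < ε := by linarith

lemma F_mvp {s : ℝ} (hs0 : 0 < s) {u : ℂ → ℝ} (hu : IsHarmonicOn u (annulus s 1))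
    (hc : ContinuousOn u (closedAnnulus s 1)) {a : ℂ} {ρ : ℝ}
    (hρ : 0 < ρ) (hball : closedBall a ρ ⊆ annulus s 1) :
    circleAvg u 0 (‖a‖) = circleAvg (fun z => circleAvg u 0 (‖z‖)) a ρ := by
  obtain ⟨hρa, hgs, hg1⟩ := ball_geom hs0 hρ hball
  have ha : a ≠ 0 := fun h => by rw [h, norm_zero] at hρa; linarith
  have hπ := Real.two_pi_pos
  have hmem : ∀ α : ℝ, circleMap a ρ α ∈ annulus s 1 :=
    fun α => hball (circleMap_mem_closedBall a hρ.le α)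
  have hne : ∀ α : ℝ, circleMap a ρ α ≠ 0 := by
    intro α h
    have h2 := (hmem α).1
    rw [h, norm_zero] at h2; linarith
  have hEabs : ∀ (w : ℂ) (θ : ℝ), ‖w * Complex.exp ((θ:ℂ)*I)‖ = ‖w‖ := by
    intro w θ; rw [norm_mul, Complex.norm_exp_ofReal_mul_I, mul_one]
  have stepA : ∀ w : ℂ, w ≠ 0 → circleAvg u 0 (‖w‖)
      = (1/(2*Real.pi)) * ∫ θ in (0:ℝ)..(2*Real.pi), u (w * Complex.exp ((θ:ℂ)*I)) := by
    intro w hw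
    rw [circleAvg_eq]
    congr 1
    rw [intervalIntegral.integral_congr
      (g := fun θ : ℝ => u ((‖w‖ : ℂ) * Complex.exp ((θ:ℂ)*I)))
      (fun θ _ => by rw [circleMap_zero])]
    exact (rotate_integral u hw).symm
  have haE : ∀ θ : ℝ, (a * Complex.exp ((θ:ℂ)*I)) ∈ annulus s 1 := by
    intro θ
    constructor
    · rw [hEabs a θ]; linarith
    · rw [hEabs a θ]; linarith
  have hmvp : ∀ θ : ℝ, (∫ α in (0:ℝ)..(2*Real.pi),
        u (circleMap (a * Complex.exp ((θ:ℂ)*I)) ρ α))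
      = (2*Real.pi) * u (a * Complex.exp ((θ:ℂ)*I)) := by
    intro θ
    have h1 := hu.2 _ (haE θ) ρ hρ (ball_rot (hEabs a θ) hgs hg1)
    rw [circleAvg_eq] at h1
    rw [h1]
    field_simp
  have stepC : ∀ θ : ℝ, (∫ α in (0:ℝ)..(2*Real.pi),
        u (circleMap a ρ α * Complex.exp ((θ:ℂ)*I)))
      = (2*Real.pi) * u (a * Complex.exp ((θ:ℂ)*I)) := by
    intro θ
    have hpt : ∀ α : ℝ, circleMap a ρ α * Complex.exp ((θ:ℂ)*I)
        = circleMap (a * Complex.exp ((θ:ℂ)*I)) ρ (α + θ) := by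
      intro α
      simp only [circleMap]
      rw [add_mul]
      congr 1
      rw [mul_assoc, ← Complex.exp_add]
      push_cast
      ring_nf
    simp_rw [hpt]
    rw [periodic_shift (f := fun α => u (circleMap (a * Complex.exp ((θ:ℂ)*I)) ρ α))
      ((periodic_circleMap _ _).comp u) θ]
    exact hmvp θ
  have hGcont : Continuous fun p : ℝ × ℝ =>
      u (circleMap a ρ p.1 * Complex.exp ((p.2:ℂ)*I)) := by
    apply hc.comp_continuous
    · exact ((continuous_circleMap a ρ).comp continuous_fst).mul
        (Complex.continuous_exp.comp
          ((Complex.continuous_ofReal.comp continuous_snd).mul continuous_const))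
    · intro p
      have h2 := hmem p.1
      exact ⟨(hEabs _ _).symm ▸ h2.1.le, (hEabs _ _).symm ▸ h2.2.le⟩
  symm
  calc circleAvg (fun z => circleAvg u 0 (‖z‖)) a ρ
      = (1/(2*Real.pi)) * ∫ α in (0:ℝ)..(2*Real.pi),
          circleAvg u 0 (‖circleMap a ρ α‖) := circleAvg_eq _ a ρ
    _ = (1/(2*Real.pi)) * ∫ α in (0:ℝ)..(2*Real.pi), ((1/(2*Real.pi)) *
          ∫ θ in (0:ℝ)..(2*Real.pi), u (circleMap a ρ α * Complex.exp ((θ:ℂ)*I))) := by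
        congr 1
        exact intervalIntegral.integral_congr (fun α _ => stepA _ (hne α))
    _ = (1/(2*Real.pi)) * ((1/(2*Real.pi)) * ∫ α in (0:ℝ)..(2*Real.pi),
          ∫ θ in (0:ℝ)..(2*Real.pi), u (circleMap a ρ α * Complex.exp ((θ:ℂ)*I))) := by
        rw [intervalIntegral.integral_const_mul]
    _ = (1/(2*Real.pi)) * ((1/(2*Real.pi)) * ∫ θ in (0:ℝ)..(2*Real.pi),
          ∫ α in (0:ℝ)..(2*Real.pi), u (circleMap a ρ α * Complex.exp ((θ:ℂ)*I))) := by
        rw [mySwap_integral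
          (G := fun α θ => u (circleMap a ρ α * Complex.exp ((θ:ℂ)*I))) hGcont]
    _ = (1/(2*Real.pi)) * ((1/(2*Real.pi)) * ∫ θ in (0:ℝ)..(2*Real.pi),
          (2*Real.pi) * u (a * Complex.exp ((θ:ℂ)*I))) := by
        congr 2
        exact intervalIntegral.integral_congr (fun θ _ => stepC θ)
    _ = (1/(2*Real.pi)) * ∫ θ in (0:ℝ)..(2*Real.pi), u (a * Complex.exp ((θ:ℂ)*I)) := by
        rw [intervalIntegral.integral_const_mul]
        field_simp
        refine intervalIntegral.integral_congr (fun θ _ => ?_)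
        simp only [mul_comm I]
    _ = circleAvg u 0 (‖a‖) := (stepA a ha).symm

lemma circleAvg_log {a : ℂ} {ρ : ℝ} (hρ : 0 < ρ) (hρa : ρ < ‖a‖) :
    circleAvg (fun z => Real.log (‖z‖)) a ρ = Real.log (‖a‖) := by
  rw [circleAvg_eq, log_abs_mvp hρ hρa]
  field_simp

lemma isOpen_annulus {s : ℝ} : IsOpen (annulus s 1) := by
  have : annulus s 1 = (fun z : ℂ => ‖z‖) ⁻¹' (Ioo s 1) := rfl
  rw [this]
  exact isOpen_Ioo.preimage continuous_norm

lemma key_bound {s : ℝ} (hs0 : 0 < s) (hs1 : s < 1)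
    (u : ℂ → ℝ) (hu : IsHarmonicOn u (annulus s 1))
    (hc : ContinuousOn u (closedAnnulus s 1)) :
    ∀ z ∈ closedAnnulus s 1,
      circleAvg u 0 (‖z‖)
        - (circleAvg u 0 s - circleAvg u 0 1) / Real.log s * Real.log (‖z‖)
        ≤ circleAvg u 0 1 := by
  intro z hzK
  have hπ := Real.two_pi_pos
  have hlogs : Real.log s ≠ 0 := (Real.log_neg hs0 hs1).ne
  set φ : ℝ → ℝ := fun r => circleAvg u 0 r with hφdef
  set β : ℝ := (φ s - φ 1) / Real.log s with hβdef
  have hcφ : ContinuousOn φ (Icc s 1) := phi_cont hs0 hc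
  have h1K : (1:ℂ) ∈ closedAnnulus s 1 := by
    constructor <;> simp [hs1.le]
  -- continuity of each piece on K
  have hFc : ContinuousOn (fun z => φ (‖z‖)) (closedAnnulus s 1) :=
    hcφ.comp continuous_norm.continuousOn (fun w hw => ⟨hw.1, hw.2⟩)
  have hLc : ContinuousOn (fun z => Real.log (‖z‖)) (closedAnnulus s 1) := by
    apply Real.continuousOn_log.comp continuous_norm.continuousOn
    intro w hw
    simp only [Set.mem_compl_iff, Set.mem_singleton_iff]
    intro h
    have h2 := hw.1
    rw [h] at h2
    linarith
  suffices H : ∀ ε : ℝ, 0 < ε → φ (‖z‖) - β * Real.log (‖z‖) ≤ φ 1 + ε by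
    have := le_of_forall_pos_le_add H
    linarith [this]
  intro ε hε
  set W : ℂ → ℝ := fun w =>
    (φ (‖w‖) - β * Real.log (‖w‖)) + ε * ‖w‖ ^ 2 with hWdef
  have hWc : ContinuousOn W (closedAnnulus s 1) := by
    apply ContinuousOn.add (hFc.sub (continuousOn_const.mul hLc))
    exact (continuous_const.mul ((continuous_norm.pow 2))).continuousOn
  obtain ⟨x₀, hx₀K, hmax⟩ :=
    closedAnnulus_compact.exists_isMaxOn ⟨(1:ℂ), h1K⟩ hWc
  -- the max is attained on the boundary
  have hbd : W x₀ ≤ φ 1 + ε := by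
    by_cases hx₀ : x₀ ∈ annulus s 1
    · exfalso
      obtain ⟨ρ0, hρ0, hball0⟩ := Metric.isOpen_iff.1 isOpen_annulus x₀ hx₀
      set ρ : ℝ := ρ0 / 2 with hρdef
      have hρ : 0 < ρ := by positivity
      have hball : closedBall x₀ ρ ⊆ annulus s 1 :=
        subset_trans (closedBall_subset_ball (by simp [hρdef]; linarith)) hball0
      obtain ⟨hρa, hgs, hg1⟩ := ball_geom hs0 hρ hball
      have hcm : ∀ θ : ℝ, circleMap x₀ ρ θ ∈ annulus s 1 :=
        fun θ => hball (circleMap_mem_closedBall x₀ hρ.le θ)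
      -- integrability of the pieces
      have hiF : IntervalIntegrable (fun θ => φ (‖circleMap x₀ ρ θ‖))
          volume 0 (2*Real.pi) :=
        intInt_of_continuousOn hFc (fun θ => annulus_subset (hcm θ))
      have hiL : IntervalIntegrable (fun θ => Real.log (‖circleMap x₀ ρ θ‖))
          volume 0 (2*Real.pi) :=
        intInt_of_continuousOn hLc (fun θ => annulus_subset (hcm θ))
      have hiLβ : IntervalIntegrable (fun θ => β * Real.log (‖circleMap x₀ ρ θ‖))
          volume 0 (2*Real.pi) := hiL.const_mul β
      have hiS : IntervalIntegrable (fun θ => ε * ‖circleMap x₀ ρ θ‖ ^ 2)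
          volume 0 (2*Real.pi) := by
        apply Continuous.intervalIntegrable
        exact continuous_const.mul
          ((continuous_norm.comp (continuous_circleMap _ _)).pow 2)
      -- mean value property of W
      have hiA : IntervalIntegrable (fun θ => φ (‖circleMap x₀ ρ θ‖)
          - β * Real.log (‖circleMap x₀ ρ θ‖)) volume 0 (2*Real.pi) :=
        hiF.sub hiLβ
      have e2 := circleAvg_sub (f := fun w => φ (‖w‖))
        (g := fun w => β * Real.log (‖w‖)) (a := x₀) (r := ρ) hiF hiLβ
      have e1 := circleAvg_add
        (f := fun w => φ (‖w‖) - β * Real.log (‖w‖))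
        (g := fun w => ε * ‖w‖ ^ 2) (a := x₀) (r := ρ) hiA hiS
      have e3 := circleAvg_const_mul β (fun w => Real.log (‖w‖)) x₀ ρ
      have e4 := circleAvg_const_mul ε (fun w => ‖w‖ ^ 2) x₀ ρ
      have e5 := F_mvp hs0 hu hc hρ hball
      have e6 := circleAvg_log hρ hρa
      have e7 := circleAvg_sq x₀ ρ
      have hWmvp : circleAvg W x₀ ρ = W x₀ + ε * ρ ^ 2 := by
        rw [hWdef]
        rw [e1, e2, e3, e4, ← e5, e6, e7]
        ring
      -- but the average is at most the max
      have hle : circleAvg W x₀ ρ ≤ W x₀ := by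
        have hiW : IntervalIntegrable (fun θ => W (circleMap x₀ ρ θ)) volume 0 (2*Real.pi) :=
          hiA.add hiS
        have h8 := circleAvg_mono (f := W) (g := fun _ => W x₀) (a := x₀) (r := ρ)
          hiW intervalIntegrable_const
          (fun θ => hmax (annulus_subset (hcm θ)))
        rwa [circleAvg_const] at h8
      have hpos : 0 < ε * ρ ^ 2 := by positivity
      linarith [hWmvp, hle]
    · -- boundary case
      have h1 : ‖x₀‖ = s ∨ ‖x₀‖ = 1 := by
        rcases hx₀K with ⟨ha1, ha2⟩
        rcases not_and_or.1 hx₀ with h | h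
        · left; push_neg at h; linarith
        · right; push_neg at h; linarith
      rcases h1 with h | h
      · rw [hWdef]
        simp only [h]
        have : β * Real.log s = φ s - φ 1 := by
          rw [hβdef]; field_simp
        have hs2 : s ^ 2 ≤ 1 := by nlinarith
        have h2 : ε * s ^ 2 ≤ ε * 1 := mul_le_mul_of_nonneg_left hs2 hε.le
        linarith [this, h2]
      · rw [hWdef]
        simp only [h]
        simp [Real.log_one]
  have hz := hmax hzK
  have hsq : ‖z‖ ^ 2 ≥ 0 := sq_nonneg _
  have : W z ≤ φ 1 + ε := le_trans hz hbd
  rw [hWdef] at this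
  simp only at this
  nlinarith [this, hε]

lemma circleAvg_neg (u : ℂ → ℝ) (a : ℂ) (r : ℝ) :
    circleAvg (fun z => -u z) a r = -circleAvg u a r := by
  rw [circleAvg_eq, circleAvg_eq, intervalIntegral.integral_neg]; ring


/-- **Interpolation formula for circle averages.** If `u` is harmonic on the
annulus `{s < |z| < 1}` (`0 < s < 1`) and continuous on its closure, then for
`r ∈ [s, 1]`,
`⨍_{|z|=r} u = (log r / log s)·⨍_{|z|=s} u + (1 - log r / log s)·⨍_{|z|=1} u`. -/
theorem circle_average_interpolation (s : ℝ) (hs0 : 0 < s) (hs1 : s < 1)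
    (u : ℂ → ℝ) (hu : IsHarmonicOn u (annulus s 1))
    (hc : ContinuousOn u (closedAnnulus s 1)) :
    ∀ r ∈ Set.Icc s 1,
      circleAvg u 0 r = (Real.log r / Real.log s) * circleAvg u 0 s +
        (1 - Real.log r / Real.log s) * circleAvg u 0 1 := by
  intro r hr
  have hrpos : 0 < r := lt_of_lt_of_le hs0 hr.1
  have habs : ‖(r:ℂ)‖ = r := by
    rw [Complex.norm_real, Real.norm_eq_abs]; exact _root_.abs_of_nonneg hrpos.le
  have hrK : ((r:ℝ):ℂ) ∈ closedAnnulus s 1 :=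
    ⟨by rw [habs]; exact hr.1, by rw [habs]; exact hr.2⟩
  have hlogs : Real.log s ≠ 0 := (Real.log_neg hs0 hs1).ne
  have h1 := key_bound hs0 hs1 u hu hc (r:ℂ) hrK
  rw [habs] at h1
  have hun : IsHarmonicOn (fun z => -u z) (annulus s 1) :=
    ⟨hu.1.neg, fun a ha ρ hρ hb => by rw [circleAvg_neg, ← hu.2 a ha ρ hρ hb]⟩
  have hcn : ContinuousOn (fun z => -u z) (closedAnnulus s 1) := hc.neg
  have h2 := key_bound hs0 hs1 _ hun hcn (r:ℂ) hrK
  rw [habs, circleAvg_neg, circleAvg_neg, circleAvg_neg] at h2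
  have hfix : (-circleAvg u 0 s - -circleAvg u 0 1)/Real.log s * Real.log r
      = -((circleAvg u 0 s - circleAvg u 0 1)/Real.log s * Real.log r) := by ring
  rw [hfix] at h2
  have heq : circleAvg u 0 r = circleAvg u 0 1
      + (circleAvg u 0 s - circleAvg u 0 1)/Real.log s * Real.log r := by linarith
  rw [heq]
  field_simp
  ring
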